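/- Every countable strongly annihilated ideal I of C(X) is a z-ideal whose family of zero-sets Z[I] = {Z(f) : f ∈ I} is closed under countable intersection; in particular, I is strongly divisible. -/

import Mathlib

open ContinuousMap

/-- An ideal `I` is countable strongly annihilated if for each countable subset `S ⊆ I`
and each `b ∉ I` there exists `c` with `c * a = 0` for all `a ∈ S` but `c * b ≠ 0`. -/
def CountableStronglyAnnihilated {R : Type*} [CommRing R] (I : Ideal R) : Prop :=
  ∀ S : Set R, S.Countable → S ⊆ I → ∀ b ∉ I, ∃ c : R, (∀ a ∈ S, c * a = 0) ∧ c * b ≠ 0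

/-!
If `c` annihilates countably many `aₙ ∈ I`, it vanishes on each cozero-set `{aₙ ≠ 0}`, hence it
annihilates every `g` with `⋂ Z(aₙ) ⊆ Z(g)`; by strong annihilation such a `g` lies in `I`. This
gives the `z`-ideal property at once, and the countable-intersection property through
`d = ∑ 2⁻ⁿ √(min |aₙ| 1)`, whose zero-set is `⋂ Z(aₙ)`. The square root makes
`min |aₙ| 1 ≤ 4ⁿ d²`, so `aₙ / d` tends to `0` at `Z(d)` and `d` divides every `aₙ`.
-/

open Filter Topology

namespace ContinuousMap

variable {X : Type*} [TopologicalSpace X]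

theorem exists_eq_mul_of_min_abs_one_le {f c : C(X, ℝ)} {K : ℝ}
    (h : ∀ x, min |f x| 1 ≤ K * c x ^ 2) : ∃ b : C(X, ℝ), f = c * b := by
  have hf : ∀ x, c x = 0 → f x = 0 := fun x hx => by
    have := h x
    norm_num [hx, min_le_iff] at this
    exact this
  -- Division by zero returns `0`, the intended value of the quotient on `Z(c)`.
  have hb : Continuous fun x => f x / c x := by
    refine continuous_iff_continuousAt.2 fun x₀ => ?_
    by_cases hc : c x₀ = 0
    · have hsmall : ∀ᶠ x in 𝓝 x₀, |f x| < 1 :=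
        f.continuous.abs.continuousAt.eventually_lt continuousAt_const (by simp [hf x₀ hc])
      have hbound : Tendsto (fun x => K * |c x|) (𝓝 x₀) (𝓝 0) :=
        (by fun_prop : Continuous fun x => K * |c x|).tendsto' x₀ 0 (by simp [hc])
      rw [ContinuousAt, hc, div_zero]
      refine squeeze_zero_norm' ?_ hbound
      filter_upwards [hsmall] with x hx
      rcases eq_or_ne (c x) 0 with hcx | hcx
      · simp [hcx]
      · have hfx : |f x| ≤ K * |c x| ^ 2 := by
          simpa [min_eq_left hx.le, sq_abs] using h x
        rw [Real.norm_eq_abs, abs_div, div_le_iff₀ (abs_pos.2 hcx)]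
        linarith
    · exact f.continuous.continuousAt.div c.continuous.continuousAt hc
  refine ⟨⟨_, hb⟩, ext fun x => ?_⟩
  rcases eq_or_ne (c x) 0 with hx | hx
  · simp [hx, hf x hx]
  · simp [mul_div_cancel₀ _ hx]

section CommonDivisor

variable (a : ℕ → C(X, ℝ))

noncomputable def divisorTerm (n : ℕ) (x : X) : ℝ :=
  (1 / 2 : ℝ) ^ n * √(min |a n x| 1)

theorem divisorTerm_nonneg (n : ℕ) (x : X) : 0 ≤ divisorTerm a n x := by
  unfold divisorTerm; positivity

theorem divisorTerm_le (n : ℕ) (x : X) : divisorTerm a n x ≤ (1 / 2 : ℝ) ^ n :=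
  mul_le_of_le_one_right (by positivity) (Real.sqrt_le_one.2 (min_le_right _ _))

theorem continuous_divisorTerm (n : ℕ) : Continuous (divisorTerm a n) :=
  continuous_const.mul (((a n).continuous.abs.min continuous_const).sqrt)

theorem summable_divisorTerm (x : X) : Summable fun n => divisorTerm a n x :=
  summable_geometric_two.of_nonneg_of_le (divisorTerm_nonneg a · x) (divisorTerm_le a · x)

noncomputable def commonDivisor : C(X, ℝ) where
  toFun x := ∑' n, divisorTerm a n x
  continuous_toFun := continuous_tsum (continuous_divisorTerm a) summable_geometric_two
    fun n x => by
      simpa [abs_of_nonneg (divisorTerm_nonneg a n x)] using divisorTerm_le a n x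

theorem divisorTerm_le_commonDivisor (n : ℕ) (x : X) : divisorTerm a n x ≤ commonDivisor a x :=
  (summable_divisorTerm a x).le_tsum n fun j _ => divisorTerm_nonneg a j x

theorem commonDivisor_eq_zero_iff (x : X) : commonDivisor a x = 0 ↔ ∀ n, a n x = 0 := by
  change ∑' n, divisorTerm a n x = 0 ↔ _
  rw [← (summable_divisorTerm a x).hasSum_iff,
    hasSum_zero_iff_of_nonneg (divisorTerm_nonneg a · x), funext_iff]
  norm_num [divisorTerm, Real.sqrt_eq_zero', -Real.sqrt_eq_zero]

theorem min_abs_one_le_commonDivisor_sq (n : ℕ) (x : X) :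
    min |a n x| 1 ≤ 4 ^ n * commonDivisor a x ^ 2 := by
  have hweight : (4 : ℝ) ^ n * ((1 / 2) ^ n) ^ 2 = 1 := by
    rw [← pow_mul, mul_comm n, pow_mul, ← mul_pow]
    norm_num
  calc min |a n x| 1 = 4 ^ n * divisorTerm a n x ^ 2 := by
        rw [divisorTerm, mul_pow, Real.sq_sqrt (by positivity), ← mul_assoc, hweight, one_mul]
    _ ≤ 4 ^ n * commonDivisor a x ^ 2 := by
        have := divisorTerm_nonneg a n x
        gcongr
        exact divisorTerm_le_commonDivisor a n x

theorem exists_eq_commonDivisor_mul (n : ℕ) : ∃ b : C(X, ℝ), a n = commonDivisor a * b :=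
  exists_eq_mul_of_min_abs_one_le (min_abs_one_le_commonDivisor_sq a n)

end CommonDivisor

end ContinuousMap

theorem CountableStronglyAnnihilated.mem_of_forall_eq_zero {X : Type*} [TopologicalSpace X]
    {I : Ideal C(X, ℝ)} (hI : CountableStronglyAnnihilated I) {a : ℕ → C(X, ℝ)}
    (ha : ∀ n, a n ∈ I) {g : C(X, ℝ)} (hg : ∀ x, (∀ n, a n x = 0) → g x = 0) : g ∈ I := by
  by_contra hgI
  obtain ⟨c, hca, hcg⟩ :=
    hI (Set.range a) (Set.countable_range a) (Set.range_subset_iff.2 ha) g hgI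
  refine hcg (ext fun x => ?_)
  by_cases hcx : c x = 0
  · simp [hcx]
  · have hax : ∀ n, a n x = 0 := fun n => by
      simpa [hcx] using congrArg (· x) (hca (a n) ⟨n, rfl⟩)
    simp [hg x hax]

theorem stmt14 {X : Type*} [TopologicalSpace X]
    (I : Ideal C(X, ℝ)) (hI : CountableStronglyAnnihilated I) :
    (∀ f ∈ I, ∀ g : C(X, ℝ), {x | f x = 0} = {x | g x = 0} → g ∈ I) ∧
    (∀ f : ℕ → C(X, ℝ), (∀ n, f n ∈ I) →
      ∃ g ∈ I, {x | g x = 0} = ⋂ n, {x | f n x = 0}) ∧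
    (∀ a : ℕ → C(X, ℝ), (∀ n, a n ∈ I) →
      ∃ c ∈ I, ∀ n, ∃ b : C(X, ℝ), a n = c * b) := by
  have commonDivisor_mem : ∀ a : ℕ → C(X, ℝ), (∀ n, a n ∈ I) → commonDivisor a ∈ I :=
    fun a ha => hI.mem_of_forall_eq_zero ha fun x => (commonDivisor_eq_zero_iff a x).2
  refine ⟨fun f hf g hfg => ?_, fun f hf => ?_, fun a ha => ?_⟩
  · refine hI.mem_of_forall_eq_zero (a := fun _ => f) (fun _ => hf) fun x hx => ?_
    exact (Set.ext_iff.1 hfg x).1 (hx 0)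
  · refine ⟨commonDivisor f, commonDivisor_mem f hf, ?_⟩
    ext x
    simpa using commonDivisor_eq_zero_iff f x
  · exact ⟨commonDivisor a, commonDivisor_mem a ha, exists_eq_commonDivisor_mul a⟩
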